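/- arXiv:2603.22129 — 3 statements merged into one kernel-verified Lean document; each statement's English description precedes it below -/
import Mathlib

section
/- Let P be a polynomial in one complex variable all of whose zeros lie outside the open unit disk (i.e., P(z) ≠ 0 whenever |z| < 1). Then for every r ∈ [0,1) and every z ∈ ℂ with |z| ≤ 1 one has |P(z)| ≤ 2^(deg P) · |P(rz)|. -/
/-!
Factor `P = c ∏ (X - a)` over its roots, all of which satisfy `1 ≤ ‖a‖`. For each root,
`‖z - a‖ ≤ (1 - r) + ‖rz - a‖ ≤ 2 ‖rz - a‖`, since `‖rz - a‖ ≥ ‖a‖ - r ≥ 1 - r`;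
multiplying these `deg P` inequalities gives the claim.
-/

open Polynomial

theorem norm_sub_le_two_mul_norm_smul_sub {E : Type*} [SeminormedAddCommGroup E]
    [NormedSpace ℝ E] {r : ℝ} (hr0 : 0 ≤ r) (hr1 : r ≤ 1) {z a : E} (hz : ‖z‖ ≤ 1)
    (ha : 1 ≤ ‖a‖) : ‖z - a‖ ≤ 2 * ‖r • z - a‖ := by
  have hrz : ‖r • z‖ = r * ‖z‖ := by rw [norm_smul, Real.norm_of_nonneg hr0]
  have hshrink : ‖z - r • z‖ = (1 - r) * ‖z‖ := by
    rw [show z - r • z = (1 - r) • z by rw [sub_smul, one_smul], norm_smul,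
      Real.norm_of_nonneg (sub_nonneg.2 hr1)]
  have hfar : ‖a‖ - ‖r • z‖ ≤ ‖r • z - a‖ := norm_sub_rev a (r • z) ▸ norm_sub_norm_le a (r • z)
  calc ‖z - a‖ ≤ ‖z - r • z‖ + ‖r • z - a‖ := norm_sub_le_norm_sub_add_norm_sub _ _ _
    _ ≤ 2 * ‖r • z - a‖ := by nlinarith [norm_nonneg z]

theorem Polynomial.Splits.norm_eval_le_pow_mul_norm_eval {K : Type*} [NormedField K]
    {P : K[X]} (hP : P.Splits) {z w : K} {c : ℝ}
    (h : ∀ a ∈ P.roots, ‖z - a‖ ≤ c * ‖w - a‖) :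
    ‖P.eval z‖ ≤ c ^ P.natDegree * ‖P.eval w‖ := by
  have hprod : ∀ x : K, ‖(P.roots.map (x - ·)).prod‖ = (P.roots.map (‖x - ·‖)).prod := by
    intro x
    change (normHom : K →*₀ ℝ) _ = _
    rw [map_multiset_prod (normHom : K →*₀ ℝ), Multiset.map_map]
    rfl
  rw [hP.eval_eq_prod_roots, hP.eval_eq_prod_roots, norm_mul, norm_mul, hprod, hprod]
  calc ‖P.leadingCoeff‖ * (P.roots.map (‖z - ·‖)).prod
      ≤ ‖P.leadingCoeff‖ * (P.roots.map fun a => c * ‖w - a‖).prod := by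
        gcongr
        exact Multiset.prod_map_le_prod_map₀ _ _ (fun _ _ => norm_nonneg _) h
    _ = c ^ P.natDegree * (‖P.leadingCoeff‖ * (P.roots.map (‖w - ·‖)).prod) := by
        rw [Multiset.prod_map_mul, Multiset.map_const', Multiset.prod_replicate,
          ← hP.natDegree_eq_card_roots]
        ring

/-- **Neuwirth–Ginsberg–Newman inequality in one variable.**
If `P ∈ ℂ[z]` has no zeros in the open unit disk, then for every `r ∈ [0,1)` and
every `z` in the closed unit disk, `|P(z)| ≤ 2 ^ deg P * |P(rz)|`. -/
theorem ngn_one_variable (P : Polynomial ℂ)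
    (hstable : ∀ z : ℂ, ‖z‖ < 1 → P.eval z ≠ 0) :
    ∀ r : ℝ, 0 ≤ r → r < 1 → ∀ z : ℂ, ‖z‖ ≤ 1 →
      ‖P.eval z‖ ≤ 2 ^ P.natDegree * ‖P.eval ((r : ℂ) * z)‖ := by
  intro r hr0 hr1 z hz
  have hroots : ∀ a ∈ P.roots, 1 ≤ ‖a‖ := fun a ha =>
    not_lt.1 fun h => hstable a h (mem_roots'.1 ha).2
  refine (IsAlgClosed.splits P).norm_eval_le_pow_mul_norm_eval fun a ha => ?_
  rw [← Complex.real_smul]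
  exact norm_sub_le_two_mul_norm_smul_sub hr0 hr1.le hz (hroots a ha)
end

section
/- Let d be a positive integer and let P be a polynomial in d commuting complex variables that is stable on the open unit polydisk, i.e., P(w) ≠ 0 whenever |w_j| < 1 for all j = 1, …, d. Then for every r ∈ [0,1) and every w = (w₁, …, w_d) in the closed unit polydisk (|w_j| ≤ 1 for all j) one has |P(w)| ≤ 2^(deg P) · |P(rw₁, …, rw_d)|, where deg P denotes the total degree of P. -/
/-!
Restrict `P` to the complex line through `w`: `q(z) = P(z w)` is a one-variable polynomial of
degree at most `deg P` with no zeros in the open unit disk. Factor `q(z) = c ∏ (z - a)` over its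
roots; each root has `|a| ≥ 1`, so `|1 - a| ≤ (1 - r) + |r - a| ≤ 2 |r - a|`, and multiplying over
the roots gives `|q(1)| ≤ 2 ^ deg q |q(r)|`.
-/

open Polynomial

lemma norm_one_sub_le_two_mul_norm_ofReal_sub {a : ℂ} (ha : 1 ≤ ‖a‖) {r : ℝ} (hr0 : 0 ≤ r)
    (hr1 : r ≤ 1) : ‖1 - a‖ ≤ 2 * ‖(r : ℂ) - a‖ := by
  have h1r : ‖(1 : ℂ) - r‖ = 1 - r := by
    rw [← Complex.ofReal_one, ← Complex.ofReal_sub, Complex.norm_real,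
      Real.norm_of_nonneg (by linarith)]
  have hdist : 1 - r ≤ ‖(r : ℂ) - a‖ := by
    have := norm_sub_norm_le a (r : ℂ)
    rw [norm_sub_rev, Complex.norm_real, Real.norm_of_nonneg hr0] at this
    linarith
  calc ‖1 - a‖ ≤ ‖(1 : ℂ) - r‖ + ‖(r : ℂ) - a‖ := norm_sub_le_norm_sub_add_norm_sub _ _ _
    _ ≤ 2 * ‖(r : ℂ) - a‖ := by linarith

theorem Polynomial.norm_eval_one_le_two_pow_natDegree_mul {p : ℂ[X]}
    (hp : ∀ z : ℂ, ‖z‖ < 1 → p.eval z ≠ 0) {r : ℝ} (hr0 : 0 ≤ r) (hr1 : r ≤ 1) :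
    ‖p.eval 1‖ ≤ 2 ^ p.natDegree * ‖p.eval (r : ℂ)‖ := by
  have hp0 : p ≠ 0 := by
    rintro rfl
    exact hp 0 (by simp) eval_zero
  have hroots : ∀ a ∈ p.roots, 1 ≤ ‖a‖ := fun a ha =>
    not_lt.mp fun h => hp a h ((mem_roots hp0).mp ha)
  have hsplit := IsAlgClosed.splits p
  have hprod : ∀ s : Multiset ℂ, ‖s.prod‖ = (s.map (‖·‖)).prod :=
    map_multiset_prod (normHom : ℂ →*₀ ℝ)
  rw [hsplit.eval_eq_prod_roots, hsplit.eval_eq_prod_roots, norm_mul, norm_mul, hprod, hprod,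
    Multiset.map_map, Multiset.map_map, mul_left_comm]
  gcongr
  calc (p.roots.map fun a => ‖1 - a‖).prod
      ≤ (p.roots.map fun a => 2 * ‖(r : ℂ) - a‖).prod :=
        Multiset.prod_map_le_prod_map₀ _ _ (fun _ _ => norm_nonneg _)
          fun a ha => norm_one_sub_le_two_mul_norm_ofReal_sub (hroots a ha) hr0 hr1
    _ = 2 ^ Multiset.card p.roots * (p.roots.map fun a => ‖(r : ℂ) - a‖).prod := by
        rw [Multiset.prod_map_mul, Multiset.map_const', Multiset.prod_replicate]
    _ ≤ 2 ^ p.natDegree * (p.roots.map fun a => ‖(r : ℂ) - a‖).prod := by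
        gcongr
        · exact Multiset.prod_nonneg fun x hx => by
            obtain ⟨b, -, rfl⟩ := Multiset.mem_map.mp hx; positivity
        · norm_num
        · exact card_roots' p

namespace MvPolynomial

variable {σ R : Type*} [CommSemiring R]

lemma eval_aeval_C_mul_X (P : MvPolynomial σ R) (w : σ → R) (z : R) :
    (aeval (fun j => Polynomial.C (w j) * Polynomial.X) P).eval z = eval (fun j => z * w j) P := by
  rw [aeval_def, polynomial_eval_eval₂, eval]
  congr
  · ext; simp
  · ext; simp only [Polynomial.eval_mul, Polynomial.eval_C, Polynomial.eval_X, mul_comm]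

lemma natDegree_aeval_C_mul_X_le (P : MvPolynomial σ R) (w : σ → R) :
    (aeval (fun j => Polynomial.C (w j) * Polynomial.X) P).natDegree ≤ P.totalDegree := by
  simpa using aeval_natDegree_le P le_rfl _ fun j => (natDegree_C_mul_le _ _).trans natDegree_X_le

end MvPolynomial

open MvPolynomial in
theorem ngn_polydisk_general (d : ℕ) (P : MvPolynomial (Fin d) ℂ)
    (hstable : ∀ w : Fin d → ℂ, (∀ j, ‖w j‖ < 1) → MvPolynomial.eval w P ≠ 0) :
    ∀ r : ℝ, 0 ≤ r → r < 1 → ∀ w : Fin d → ℂ, (∀ j, ‖w j‖ ≤ 1) →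
      ‖MvPolynomial.eval w P‖ ≤
        2 ^ P.totalDegree * ‖MvPolynomial.eval (fun j => (r : ℂ) * w j) P‖ := by
  intro r hr0 hr1 w hw
  set q : ℂ[X] := aeval (fun j => Polynomial.C (w j) * Polynomial.X) P
  have hq : ∀ z, q.eval z = MvPolynomial.eval (fun j => z * w j) P := eval_aeval_C_mul_X P w
  have hq_stable : ∀ z : ℂ, ‖z‖ < 1 → q.eval z ≠ 0 := fun z hz => by
    rw [hq]
    refine hstable _ fun j => ?_
    rw [norm_mul]
    exact (mul_le_of_le_one_right (norm_nonneg z) (hw j)).trans_lt hz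
  calc ‖MvPolynomial.eval w P‖ = ‖q.eval 1‖ := by simp only [hq, one_mul]
    _ ≤ 2 ^ q.natDegree * ‖q.eval (r : ℂ)‖ :=
        norm_eval_one_le_two_pow_natDegree_mul hq_stable hr0 hr1.le
    _ ≤ 2 ^ P.totalDegree * ‖MvPolynomial.eval (fun j => (r : ℂ) * w j) P‖ := by
        rw [hq]
        gcongr
        · norm_num
        · exact natDegree_aeval_C_mul_X_le P w

/-- **Neuwirth–Ginsberg–Newman inequality on the polydisk.**
If `P ∈ ℂ[z₁,…,z_d]` is nonvanishing on the open unit polydisk, then for every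
`r ∈ [0,1)` and every `w` in the closed unit polydisk,
`|P(w)| ≤ 2 ^ deg P * |P(rw)|`, where `deg P` is the total degree. -/
theorem ngn_polydisk (d : ℕ) (hd : 0 < d) (P : MvPolynomial (Fin d) ℂ)
    (hstable : ∀ w : Fin d → ℂ, (∀ j, ‖w j‖ < 1) → MvPolynomial.eval w P ≠ 0) :
    ∀ r : ℝ, 0 ≤ r → r < 1 → ∀ w : Fin d → ℂ, (∀ j, ‖w j‖ ≤ 1) →
      ‖MvPolynomial.eval w P‖ ≤
        2 ^ P.totalDegree * ‖MvPolynomial.eval (fun j => (r : ℂ) * w j) P‖ :=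
  ngn_polydisk_general d P hstable
end

section
/- Lemma (NGN inequality for pencil times invertible polynomial): Let A = (A₁,…,A_d) be a d-tuple of k×k complex matrices such that ‖∑_{j=1}^d A_j ⊗ X_j‖ ≤ 1 for every n ≥ 1 and every X ∈ 𝔻_Q(n), and let L_A := I_k − ∑_{j=1}^d A_j Z_j ∈ M_k(ℂ⟨Z⟩) be the associated monic linear pencil. Let F ∈ M_k(ℂ⟨Z⟩) be invertible in M_k(ℂ⟨Z⟩) with homogeneous expansion F = ∑_{j=0}^N F_j, and set P := F·L_A. Then for every r ∈ [0,1), every n ≥ 1 and every X ∈ 𝔻_Q(n) the matrix P(rX) is invertible, and one has sup_{r ∈ [0,1), n, X ∈ 𝔻_Q(n)} ‖P(rX)⁻¹ P(X)‖ ≤ 1 + (N² + N + 1)·‖F⁻¹‖_Q·‖F‖_Q, and sup_{r ∈ [0,1), n, X ∈ 𝔻_Q(n)} ‖P(X) P(rX)⁻¹‖ ≤ 2·‖F⁻¹‖_Q·‖F‖_Q, both inequalities understood in [0,∞]. -/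
open scoped Kronecker ENNReal

noncomputable section

/-- The operator norm of a square complex matrix acting on Euclidean (ℓ²) space. -/
def opNorm {m : Type*} [Fintype m] [DecidableEq m] (M : Matrix m m ℂ) : ℝ :=
  ‖Matrix.toEuclideanCLM (𝕜 := ℂ) M‖

/-- Evaluation of a free polynomial in `ℂ⟨Z₁,…,Z_d⟩` at a `d`-tuple of `n×n`
complex matrices, i.e. the unital algebra homomorphism sending `Z_j` to `X_j`. -/
def ncEval {d n : ℕ} (X : Fin d → Matrix (Fin n) (Fin n) ℂ) :
    FreeAlgebra ℂ (Fin d) →ₐ[ℂ] Matrix (Fin n) (Fin n) ℂ :=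
  FreeAlgebra.lift ℂ X

/-- Entrywise evaluation of a `k×k` matrix of free polynomials at a `d`-tuple of
`n×n` matrices, flattened to a `kn × kn` complex matrix. -/
def ncEvalM {d k n : ℕ} (P : Matrix (Fin k) (Fin k) (FreeAlgebra ℂ (Fin d)))
    (X : Fin d → Matrix (Fin n) (Fin n) ℂ) :
    Matrix (Fin k × Fin n) (Fin k × Fin n) ℂ :=
  Matrix.of fun p q => ncEval X (P p.1 q.1) p.2 q.2

/-- Membership of `X` in the NC operator ball `𝔻_Q(n)`: `‖∑_j Q_j ⊗ X_j‖ < 1`. -/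
def memBallQ {d l n : ℕ} (Q : Fin d → Matrix (Fin l) (Fin l) ℂ)
    (X : Fin d → Matrix (Fin n) (Fin n) ℂ) : Prop :=
  opNorm (∑ j, Q j ⊗ₖ X j) < 1

/-- The supremum norm `‖G‖_Q ∈ [0,∞]` of a matrix free polynomial over `𝔻_Q`. -/
def normQ {d k l : ℕ} (Q : Fin d → Matrix (Fin l) (Fin l) ℂ)
    (G : Matrix (Fin k) (Fin k) (FreeAlgebra ℂ (Fin d))) : ℝ≥0∞ :=
  ⨆ (n : ℕ) (X : Fin d → Matrix (Fin (n + 1)) (Fin (n + 1)) ℂ) (_ : memBallQ Q X),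
    ENNReal.ofReal (opNorm (ncEvalM G X))

/-- The supremum norm `‖p‖_Q ∈ [0,∞]` of a scalar free polynomial over `𝔻_Q`. -/
def normQ1 {d l : ℕ} (Q : Fin d → Matrix (Fin l) (Fin l) ℂ)
    (p : FreeAlgebra ℂ (Fin d)) : ℝ≥0∞ :=
  ⨆ (n : ℕ) (X : Fin d → Matrix (Fin (n + 1)) (Fin (n + 1)) ℂ) (_ : memBallQ Q X),
    ENNReal.ofReal (opNorm (ncEval X p))

/-- `P ∈ M_k(ℂ⟨Z⟩)` is `Q`-stable if `P(X)` is invertible at every point of `𝔻_Q`. -/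
def QStable {d k l : ℕ} (Q : Fin d → Matrix (Fin l) (Fin l) ℂ)
    (P : Matrix (Fin k) (Fin k) (FreeAlgebra ℂ (Fin d))) : Prop :=
  ∀ (n : ℕ) (X : Fin d → Matrix (Fin (n + 1)) (Fin (n + 1)) ℂ),
    memBallQ Q X → IsUnit (ncEvalM P X)

/-- `P` is an atom of `M_k(ℂ⟨Z⟩)`: not invertible, and in any factorization
`P = F·G` one of the two factors is invertible. -/
def IsAtomPoly {d k : ℕ} (P : Matrix (Fin k) (Fin k) (FreeAlgebra ℂ (Fin d))) : Prop :=
  ¬ IsUnit P ∧ ∀ F G : Matrix (Fin k) (Fin k) (FreeAlgebra ℂ (Fin d)),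
    P = F * G → IsUnit F ∨ IsUnit G

/-- A free polynomial is homogeneous of degree `j` if rescaling the generators
by a scalar `t` rescales it by `t^j`. -/
def HomogeneousDeg {d : ℕ} (j : ℕ) (p : FreeAlgebra ℂ (Fin d)) : Prop :=
  ∀ t : ℂ, FreeAlgebra.lift ℂ (fun i => t • FreeAlgebra.ι ℂ i) p = t ^ j • p

end

/-!
Write `Λ = ∑ⱼ Aⱼ ⊗ Xⱼ`, so that `‖Λ‖ ≤ 1`, `L_A(rX) = 1 - rΛ` and `‖L_A(rX)⁻¹‖ ≤ (1 - r)⁻¹`.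
Since `L_A(X) = L_A(rX) - (1 - r)Λ`, both `L_A(rX)⁻¹ L_A(X)` and `L_A(X) L_A(rX)⁻¹` have norm at
most `2`, which gives the bound for `P(X) P(rX)⁻¹ = F(X) (L_A(X) L_A(rX)⁻¹) F(rX)⁻¹` at once.
For the other one,
`P(rX)⁻¹ P(X) = L_A(rX)⁻¹ F(rX)⁻¹ (F(X) - F(rX)) L_A(X) + L_A(rX)⁻¹ L_A(X)`,
and the factor `(1 - r)⁻¹` is absorbed by `‖F(X) - F(rX)‖ ≤ (1 - r) N(N+1)/2 ‖F‖_Q`: as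
`F(tX) = ∑ⱼ tʲ Fⱼ(X)`, a discrete Fourier transform over the roots of unity gives
`‖Fⱼ(X)‖ ≤ ‖F‖_Q`, and `1 - rʲ ≤ j(1 - r)`. This bounds `P(rX)⁻¹ P(X)` by
`2 + N(N+1) ‖F⁻¹‖_Q ‖F‖_Q`, and `1 ≤ ‖F⁻¹‖_Q ‖F‖_Q` (evaluate at `0`).
-/

open Finset

theorem IsPrimitiveRoot.sum_div_pow_pow {K : Type*} [Field K] {ζ : K} {n i j : ℕ}
    (hζ : IsPrimitiveRoot ζ n) (hi : i < n) (hj : j < n) :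
    ∑ m ∈ range n, (ζ ^ i / ζ ^ j) ^ m = if i = j then (n : K) else 0 := by
  have hζ0 : ζ ≠ 0 := hζ.ne_zero (by omega)
  split_ifs with hij
  · simp [hij, hζ0]
  have hω : ζ ^ i / ζ ^ j ≠ 1 := fun h =>
    hij (hζ.pow_inj hi hj (div_eq_one_iff_eq (pow_ne_zero j hζ0) |>.mp h))
  rw [geom_sum_eq hω, div_pow, ← pow_mul, ← pow_mul, mul_comm i, mul_comm j, pow_mul, pow_mul,
    hζ.pow_eq_one, one_pow, one_pow, div_one, sub_self, zero_div]

section CoefficientBounds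

variable {E : Type*} [SeminormedAddCommGroup E] [NormedSpace ℂ E]

theorem norm_coeff_le_of_norm_sum_pow_smul_le {n : ℕ} (c : ℕ → E) {M : ℝ}
    (hM : ∀ t : ℂ, ‖t‖ = 1 → ‖∑ i ∈ range n, t ^ i • c i‖ ≤ M) {j : ℕ} (hj : j < n) :
    ‖c j‖ ≤ M := by
  have hn : n ≠ 0 := by omega
  set ζ := Complex.exp (2 * Real.pi * Complex.I / n)
  have hζ : IsPrimitiveRoot ζ n := Complex.isPrimitiveRoot_exp n hn
  have hζm : ∀ m, ‖ζ ^ m‖ = 1 := fun m => by rw [norm_pow, hζ.norm'_eq_one hn, one_pow]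
  have hdft : ∑ m ∈ range n, ((ζ ^ m) ^ j)⁻¹ • ∑ i ∈ range n, (ζ ^ m) ^ i • c i
      = (n : ℂ) • c j := by
    simp_rw [smul_sum, smul_smul]
    rw [sum_comm]
    simp_rw [← sum_smul]
    have hpow : ∀ i m, ((ζ ^ m) ^ j)⁻¹ * (ζ ^ m) ^ i = (ζ ^ i / ζ ^ j) ^ m := fun i m => by
      rw [div_pow, ← pow_mul, ← pow_mul, ← pow_mul, ← pow_mul, mul_comm m i, mul_comm m j,
        inv_mul_eq_div]
    simp_rw [hpow]
    rw [sum_eq_single_of_mem j (mem_range.mpr hj) fun i hi hij => by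
      rw [hζ.sum_div_pow_pow (mem_range.mp hi) hj, if_neg hij, zero_smul]]
    rw [hζ.sum_div_pow_pow hj hj, if_pos rfl]
  have hnorm : (n : ℝ) * ‖c j‖ ≤ n * M := by
    calc (n : ℝ) * ‖c j‖ = ‖(n : ℂ) • c j‖ := by rw [norm_smul, Complex.norm_natCast]
      _ ≤ ∑ m ∈ range n, ‖((ζ ^ m) ^ j)⁻¹ • ∑ i ∈ range n, (ζ ^ m) ^ i • c i‖ :=
          hdft ▸ norm_sum_le _ _
      _ ≤ ∑ _m ∈ range n, M := sum_le_sum fun m _ => by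
          rw [norm_smul, norm_inv, norm_pow, hζm, one_pow, inv_one, one_mul]
          exact hM _ (hζm m)
      _ = n * M := by rw [sum_const, card_range, nsmul_eq_mul]
  exact le_of_mul_le_mul_left hnorm (by positivity)

theorem norm_sum_sub_sum_pow_smul_le {n : ℕ} (c : ℕ → E) {M : ℝ}
    (hM : ∀ t : ℂ, ‖t‖ = 1 → ‖∑ i ∈ range n, t ^ i • c i‖ ≤ M) {r : ℝ} (hr0 : 0 ≤ r)
    (hr1 : r ≤ 1) :
    ‖∑ i ∈ range n, c i - ∑ i ∈ range n, (r : ℂ) ^ i • c i‖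
      ≤ (1 - r) * ((∑ i ∈ range n, (i : ℝ)) * M) := by
  rw [← sum_sub_distrib, sum_mul, mul_sum]
  refine (norm_sum_le _ _).trans (sum_le_sum fun i hi => ?_)
  have hc := norm_coeff_le_of_norm_sum_pow_smul_le c hM (mem_range.mp hi)
  have hri : 1 - r ^ i ≤ i * (1 - r) := by
    have := one_add_mul_le_pow (a := r - 1) (by linarith) i
    rw [add_sub_cancel] at this
    linarith
  have hri0 : 0 ≤ 1 - r ^ i := sub_nonneg.mpr (pow_le_one₀ hr0 hr1)
  calc ‖c i - (r : ℂ) ^ i • c i‖ = (1 - r ^ i) * ‖c i‖ := by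
        rw [show c i - (r : ℂ) ^ i • c i = ((1 - r ^ i : ℝ) : ℂ) • c i by
          push_cast; rw [sub_smul, one_smul], norm_smul, Complex.norm_of_nonneg hri0]
    _ ≤ (i * (1 - r)) * M := mul_le_mul hri hc (norm_nonneg _) (by positivity)
    _ = (1 - r) * (i * M) := by ring

end CoefficientBounds

theorem ENNReal.ofReal_le_add_mul_mul {x : ℝ} {c m a b : ℝ≥0∞} (hc : c ≠ ⊤) (hm0 : m ≠ 0)
    (hm : m ≠ ⊤) (hab : 1 ≤ a * b)
    (h : a ≠ ⊤ → b ≠ ⊤ → x ≤ c.toReal + m.toReal * a.toReal * b.toReal) :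
    ENNReal.ofReal x ≤ c + m * a * b := by
  have ha0 : a ≠ 0 := by rintro rfl; simp at hab
  have hb0 : b ≠ 0 := by rintro rfl; simp at hab
  by_cases ha : a = ⊤
  · simp [ha, hm0, hb0, ENNReal.mul_top, ENNReal.top_mul]
  by_cases hb : b = ⊤
  · simp [hb, hm0, ha0, ENNReal.mul_top]
  rw [ENNReal.ofReal_le_iff_le_toReal (by finiteness), ENNReal.toReal_add hc (by finiteness),
    ENNReal.toReal_mul, ENNReal.toReal_mul]
  exact h ha hb

open scoped Matrix Matrix.Norms.L2Operator

section L2OperatorNorm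

variable {m : Type*} [Fintype m] [DecidableEq m]

theorem opNorm_eq_norm (M : Matrix m m ℂ) : opNorm M = ‖M‖ := rfl

theorem Matrix.l2_opNorm_one_le : ‖(1 : Matrix m m ℂ)‖ ≤ 1 := by
  rw [Matrix.cstar_norm_def, map_one]
  exact ContinuousLinearMap.norm_id_le

theorem Matrix.l2_opNorm_inv_one_sub_le {T : Matrix m m ℂ} (hT : ‖T‖ < 1) :
    ‖(1 - T)⁻¹‖ ≤ (1 - ‖T‖)⁻¹ := by
  rw [Matrix.nonsing_inv_eq_ringInverse, NormedRing.inverse_one_sub T hT]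
  change ‖∑' n : ℕ, T ^ n‖ ≤ _
  linarith [tsum_geometric_le_of_norm_lt_one T hT, Matrix.l2_opNorm_one_le (m := m)]

variable {Λ : Matrix m m ℂ} {r : ℝ}

theorem Matrix.l2_opNorm_real_smul_le (hΛ : ‖Λ‖ ≤ 1) (hr0 : 0 ≤ r) : ‖(r : ℂ) • Λ‖ ≤ r := by
  rw [norm_smul, Complex.norm_of_nonneg hr0]
  exact mul_le_of_le_one_right hr0 hΛ

theorem Matrix.isUnit_one_sub_real_smul (hΛ : ‖Λ‖ ≤ 1) (hr0 : 0 ≤ r) (hr1 : r < 1) :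
    IsUnit (1 - (r : ℂ) • Λ) :=
  isUnit_one_sub_of_norm_lt_one ((Matrix.l2_opNorm_real_smul_le hΛ hr0).trans_lt hr1)

theorem Matrix.l2_opNorm_inv_one_sub_real_smul_le (hΛ : ‖Λ‖ ≤ 1) (hr0 : 0 ≤ r) (hr1 : r < 1) :
    ‖(1 - (r : ℂ) • Λ)⁻¹‖ ≤ (1 - r)⁻¹ := by
  have hrΛ := Matrix.l2_opNorm_real_smul_le hΛ hr0
  refine (Matrix.l2_opNorm_inv_one_sub_le (hrΛ.trans_lt hr1)).trans ?_
  gcongr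

theorem Matrix.l2_opNorm_inv_one_sub_real_smul_mul_le (hΛ : ‖Λ‖ ≤ 1) (hr0 : 0 ≤ r)
    (hr1 : r < 1) : ‖(1 - (r : ℂ) • Λ)⁻¹ * (1 - Λ)‖ ≤ 2 := by
  have hdet := (Matrix.isUnit_iff_isUnit_det _).mp (Matrix.isUnit_one_sub_real_smul hΛ hr0 hr1)
  have hsplit : (1 - (r : ℂ) • Λ)⁻¹ * (1 - Λ)
      = 1 - ((1 - r : ℝ) : ℂ) • ((1 - (r : ℂ) • Λ)⁻¹ * Λ) := by
    rw [show (1 : Matrix m m ℂ) - Λ = (1 - (r : ℂ) • Λ) - ((1 - r : ℝ) : ℂ) • Λ by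
      push_cast; rw [sub_smul, one_smul]; abel, mul_sub, Matrix.nonsing_inv_mul _ hdet,
      mul_smul_comm]
  have h1r : 0 < 1 - r := by linarith
  calc ‖(1 - (r : ℂ) • Λ)⁻¹ * (1 - Λ)‖
      ≤ ‖(1 : Matrix m m ℂ)‖ + (1 - r) * (‖(1 - (r : ℂ) • Λ)⁻¹‖ * ‖Λ‖) := by
        rw [hsplit]
        refine (norm_sub_le _ _).trans ?_
        rw [norm_smul, Complex.norm_of_nonneg h1r.le]
        gcongr
        exact norm_mul_le _ _
    _ ≤ 1 + (1 - r) * ((1 - r)⁻¹ * 1) := by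
        gcongr
        · exact Matrix.l2_opNorm_one_le
        · exact Matrix.l2_opNorm_inv_one_sub_real_smul_le hΛ hr0 hr1
    _ = 2 := by field_simp; ring

theorem Matrix.l2_opNorm_one_sub_mul_inv_one_sub_real_smul_le (hΛ : ‖Λ‖ ≤ 1) (hr0 : 0 ≤ r)
    (hr1 : r < 1) : ‖(1 - Λ) * (1 - (r : ℂ) • Λ)⁻¹‖ ≤ 2 := by
  have h := Matrix.l2_opNorm_inv_one_sub_real_smul_mul_le (Λ := Λᴴ)
    (by rwa [Matrix.l2_opNorm_conjTranspose]) hr0 hr1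
  rwa [← Matrix.l2_opNorm_conjTranspose, Matrix.conjTranspose_mul,
    Matrix.conjTranspose_nonsing_inv, Matrix.conjTranspose_sub, Matrix.conjTranspose_sub,
    Matrix.conjTranspose_one, Matrix.conjTranspose_smul, Complex.star_def, Complex.conj_ofReal]

theorem Matrix.l2_opNorm_one_sub_le_two (hΛ : ‖Λ‖ ≤ 1) : ‖1 - Λ‖ ≤ 2 := by
  linarith [norm_sub_le (1 : Matrix m m ℂ) Λ, Matrix.l2_opNorm_one_le (m := m)]

theorem Matrix.l2_opNorm_inv_mul_mul_le {F₀ F₁ : Matrix m m ℂ} {a s : ℝ} (hΛ : ‖Λ‖ ≤ 1)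
    (hr0 : 0 ≤ r) (hr1 : r < 1) (hF₀ : IsUnit F₀) (ha : ‖F₀⁻¹‖ ≤ a)
    (hs : ‖F₁ - F₀‖ ≤ (1 - r) * s) :
    ‖(F₀ * (1 - (r : ℂ) • Λ))⁻¹ * (F₁ * (1 - Λ))‖ ≤ 2 * a * s + 2 := by
  set Lr := 1 - (r : ℂ) • Λ
  have hdet := (Matrix.isUnit_iff_isUnit_det F₀).mp hF₀
  have hsplit : (F₀ * Lr)⁻¹ * (F₁ * (1 - Λ))
      = Lr⁻¹ * (F₀⁻¹ * ((F₁ - F₀) * (1 - Λ))) + Lr⁻¹ * (1 - Λ) := by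
    rw [Matrix.mul_inv_rev, sub_mul, mul_sub F₀⁻¹, Matrix.nonsing_inv_mul_cancel_left _ _ hdet,
      mul_sub Lr⁻¹, mul_assoc]
    abel
  have ha0 : 0 ≤ a := (norm_nonneg _).trans ha
  have hs0 : 0 ≤ (1 - r) * s := (norm_nonneg _).trans hs
  have h1r : 0 < 1 - r := by linarith
  calc ‖(F₀ * Lr)⁻¹ * (F₁ * (1 - Λ))‖
      ≤ ‖Lr⁻¹‖ * (‖F₀⁻¹‖ * (‖F₁ - F₀‖ * ‖1 - Λ‖)) + ‖Lr⁻¹ * (1 - Λ)‖ := by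
        rw [hsplit]
        refine (norm_add_le _ _).trans (add_le_add_left ?_ _)
        refine (norm_mul_le _ _).trans (mul_le_mul_of_nonneg_left ?_ (norm_nonneg _))
        refine (norm_mul_le _ _).trans (mul_le_mul_of_nonneg_left ?_ (norm_nonneg _))
        exact norm_mul_le _ _
    _ ≤ (1 - r)⁻¹ * (a * ((1 - r) * s * 2)) + 2 := by
        gcongr
        · exact Matrix.l2_opNorm_inv_one_sub_real_smul_le hΛ hr0 hr1
        · exact Matrix.l2_opNorm_one_sub_le_two hΛ
        · exact Matrix.l2_opNorm_inv_one_sub_real_smul_mul_le hΛ hr0 hr1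
    _ = 2 * a * s + 2 := by field_simp

theorem Matrix.l2_opNorm_mul_mul_inv_le {F₀ F₁ : Matrix m m ℂ} {a b : ℝ} (hΛ : ‖Λ‖ ≤ 1)
    (hr0 : 0 ≤ r) (hr1 : r < 1) (ha : ‖F₀⁻¹‖ ≤ a) (hb : ‖F₁‖ ≤ b) :
    ‖(F₁ * (1 - Λ)) * (F₀ * (1 - (r : ℂ) • Λ))⁻¹‖ ≤ 2 * a * b := by
  have hb0 : 0 ≤ b := (norm_nonneg _).trans hb
  calc ‖(F₁ * (1 - Λ)) * (F₀ * (1 - (r : ℂ) • Λ))⁻¹‖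
      = ‖F₁ * ((1 - Λ) * (1 - (r : ℂ) • Λ)⁻¹) * F₀⁻¹‖ := by
        rw [Matrix.mul_inv_rev]; noncomm_ring
    _ ≤ ‖F₁‖ * ‖(1 - Λ) * (1 - (r : ℂ) • Λ)⁻¹‖ * ‖F₀⁻¹‖ := norm_mul₃_le
    _ ≤ b * 2 * a := by
        have h2 := Matrix.l2_opNorm_one_sub_mul_inv_one_sub_real_smul_le hΛ hr0 hr1
        gcongr
    _ = 2 * a * b := by ring

end L2OperatorNorm

section Evaluation

variable {d k n : ℕ}

def ncEvalMHom (X : Fin d → Matrix (Fin n) (Fin n) ℂ) :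
    Matrix (Fin k) (Fin k) (FreeAlgebra ℂ (Fin d)) →ₐ[ℂ]
      Matrix (Fin k × Fin n) (Fin k × Fin n) ℂ :=
  (Matrix.compAlgEquiv (Fin k) (Fin n) ℂ ℂ).toAlgHom.comp (AlgHom.mapMatrix (ncEval X))

theorem ncEvalMHom_apply (X : Fin d → Matrix (Fin n) (Fin n) ℂ)
    (P : Matrix (Fin k) (Fin k) (FreeAlgebra ℂ (Fin d))) : ncEvalMHom X P = ncEvalM P X :=
  rfl

theorem ncEvalM_one (X : Fin d → Matrix (Fin n) (Fin n) ℂ) :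
    ncEvalM (1 : Matrix (Fin k) (Fin k) (FreeAlgebra ℂ (Fin d))) X = 1 := by
  rw [← ncEvalMHom_apply, map_one]

theorem ncEvalM_mul (P R : Matrix (Fin k) (Fin k) (FreeAlgebra ℂ (Fin d)))
    (X : Fin d → Matrix (Fin n) (Fin n) ℂ) :
    ncEvalM (P * R) X = ncEvalM P X * ncEvalM R X := by
  simp only [← ncEvalMHom_apply, map_mul]

theorem ncEvalM_sum {ι : Type*} (s : Finset ι)
    (P : ι → Matrix (Fin k) (Fin k) (FreeAlgebra ℂ (Fin d)))
    (X : Fin d → Matrix (Fin n) (Fin n) ℂ) :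
    ncEvalM (∑ i ∈ s, P i) X = ∑ i ∈ s, ncEvalM (P i) X := by
  simp only [← ncEvalMHom_apply, map_sum]

theorem isUnit_ncEvalM_of_mul_eq_one {F G : Matrix (Fin k) (Fin k) (FreeAlgebra ℂ (Fin d))}
    (h : F * G = 1) (X : Fin d → Matrix (Fin n) (Fin n) ℂ) : IsUnit (ncEvalM F X) := by
  rw [Matrix.isUnit_iff_isUnit_det]
  exact Matrix.isUnit_det_of_right_inverse (by rw [← ncEvalM_mul, h, ncEvalM_one])

theorem inv_ncEvalM_of_mul_eq_one {F G : Matrix (Fin k) (Fin k) (FreeAlgebra ℂ (Fin d))}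
    (h : F * G = 1) (X : Fin d → Matrix (Fin n) (Fin n) ℂ) :
    (ncEvalM F X)⁻¹ = ncEvalM G X :=
  Matrix.inv_eq_right_inv (by rw [← ncEvalM_mul, h, ncEvalM_one])

theorem ncEval_smul (X : Fin d → Matrix (Fin n) (Fin n) ℂ) (t : ℂ) (p : FreeAlgebra ℂ (Fin d)) :
    ncEval (fun i => t • X i) p
      = ncEval X (FreeAlgebra.lift ℂ (fun i => t • FreeAlgebra.ι ℂ i) p) := by
  rw [← AlgHom.comp_apply]
  congr 1
  refine FreeAlgebra.hom_ext (funext fun i => ?_)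
  simp [ncEval]

theorem ncEvalM_smul_of_homogeneousDeg {j : ℕ} {G : Matrix (Fin k) (Fin k) (FreeAlgebra ℂ (Fin d))}
    (hG : ∀ p q, HomogeneousDeg j (G p q)) (X : Fin d → Matrix (Fin n) (Fin n) ℂ) (t : ℂ) :
    ncEvalM G (fun i => t • X i) = t ^ j • ncEvalM G X := by
  ext pq rs
  simp [ncEvalM, ncEval_smul, hG _ _ t]

theorem ncEvalM_smul_eq_sum {N : ℕ} {F : Matrix (Fin k) (Fin k) (FreeAlgebra ℂ (Fin d))}
    {Fj : ℕ → Matrix (Fin k) (Fin k) (FreeAlgebra ℂ (Fin d))}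
    (hFj : ∀ j, ∀ p q, HomogeneousDeg j (Fj j p q)) (hF : F = ∑ j ∈ range (N + 1), Fj j)
    (X : Fin d → Matrix (Fin n) (Fin n) ℂ) (t : ℂ) :
    ncEvalM F (fun i => t • X i) = ∑ j ∈ range (N + 1), t ^ j • ncEvalM (Fj j) X := by
  simp only [hF, ncEvalM_sum, ncEvalM_smul_of_homogeneousDeg (hFj _)]

end Evaluation

section Pencil

variable {d k n : ℕ}

def pencil (A : Fin d → Matrix (Fin k) (Fin k) ℂ) :
    Matrix (Fin k) (Fin k) (FreeAlgebra ℂ (Fin d)) :=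
  1 - ∑ j, Matrix.of fun p q => A j p q • FreeAlgebra.ι ℂ j

theorem ncEvalM_pencil (A : Fin d → Matrix (Fin k) (Fin k) ℂ)
    (X : Fin d → Matrix (Fin n) (Fin n) ℂ) :
    ncEvalM (pencil A) X = 1 - ∑ j, A j ⊗ₖ X j := by
  rw [pencil, ← ncEvalMHom_apply, map_sub, map_one, map_sum]
  congr 1
  refine sum_congr rfl fun j _ => ?_
  ext pq rs
  simp [ncEvalMHom_apply, ncEvalM, ncEval, Matrix.kroneckerMap_apply]

theorem ncEvalM_pencil_smul (A : Fin d → Matrix (Fin k) (Fin k) ℂ)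
    (X : Fin d → Matrix (Fin n) (Fin n) ℂ) (t : ℂ) :
    ncEvalM (pencil A) (fun i => t • X i) = 1 - t • ∑ j, A j ⊗ₖ X j := by
  simp only [ncEvalM_pencil, Matrix.kronecker_smul, smul_sum]

end Pencil

section PointwiseEstimates

variable {d k n N : ℕ} {F G : Matrix (Fin k) (Fin k) (FreeAlgebra ℂ (Fin d))}
  {A : Fin d → Matrix (Fin k) (Fin k) ℂ} {X : Fin d → Matrix (Fin n) (Fin n) ℂ} {r a b : ℝ}

theorem isUnit_ncEvalM_mul_pencil_smul (hFG : F * G = 1) (hΛ : ‖∑ j, A j ⊗ₖ X j‖ ≤ 1)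
    (hr0 : 0 ≤ r) (hr1 : r < 1) :
    IsUnit (ncEvalM (F * pencil A) (fun i => (r : ℂ) • X i)) := by
  rw [ncEvalM_mul, ncEvalM_pencil_smul]
  exact (isUnit_ncEvalM_of_mul_eq_one hFG _).mul (Matrix.isUnit_one_sub_real_smul hΛ hr0 hr1)

theorem norm_ncEvalM_sub_ncEvalM_smul_le {Fj : ℕ → Matrix (Fin k) (Fin k) (FreeAlgebra ℂ (Fin d))}
    (hFj : ∀ j, ∀ p q, HomogeneousDeg j (Fj j p q)) (hF : F = ∑ j ∈ range (N + 1), Fj j)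
    (hb : ∀ t : ℂ, ‖t‖ = 1 → ‖ncEvalM F (fun i => t • X i)‖ ≤ b) (hr0 : 0 ≤ r) (hr1 : r ≤ 1) :
    ‖ncEvalM F X - ncEvalM F (fun i => (r : ℂ) • X i)‖
      ≤ (1 - r) * ((∑ i ∈ range (N + 1), (i : ℝ)) * b) := by
  have hF1 : ncEvalM F X = ∑ j ∈ range (N + 1), ncEvalM (Fj j) X := by
    simpa using ncEvalM_smul_eq_sum hFj hF X 1
  rw [hF1, ncEvalM_smul_eq_sum hFj hF]
  exact norm_sum_sub_sum_pow_smul_le _ (fun t ht => ncEvalM_smul_eq_sum hFj hF X t ▸ hb t ht)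
    hr0 hr1

theorem norm_inv_ncEvalM_mul_pencil_mul_le
    {Fj : ℕ → Matrix (Fin k) (Fin k) (FreeAlgebra ℂ (Fin d))} (hFG : F * G = 1)
    (hFj : ∀ j, ∀ p q, HomogeneousDeg j (Fj j p q)) (hF : F = ∑ j ∈ range (N + 1), Fj j)
    (hΛ : ‖∑ j, A j ⊗ₖ X j‖ ≤ 1) (hr0 : 0 ≤ r) (hr1 : r < 1)
    (ha : ‖ncEvalM G (fun i => (r : ℂ) • X i)‖ ≤ a)
    (hb : ∀ t : ℂ, ‖t‖ = 1 → ‖ncEvalM F (fun i => t • X i)‖ ≤ b) (hab : 1 ≤ a * b) :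
    ‖(ncEvalM (F * pencil A) (fun i => (r : ℂ) • X i))⁻¹ * ncEvalM (F * pencil A) X‖
      ≤ 1 + ((N ^ 2 + N + 1 : ℕ) : ℝ) * a * b := by
  have hgauss : 2 * ∑ i ∈ range (N + 1), (i : ℝ) = N * (N + 1) := by
    have h := sum_range_id_mul_two (N + 1)
    rw [Nat.add_sub_cancel] at h
    rw [← Nat.cast_sum]
    norm_cast
    rw [mul_comm, h, mul_comm]
  rw [ncEvalM_mul, ncEvalM_mul, ncEvalM_pencil_smul, ncEvalM_pencil]
  refine (Matrix.l2_opNorm_inv_mul_mul_le hΛ hr0 hr1 (isUnit_ncEvalM_of_mul_eq_one hFG _)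
    (inv_ncEvalM_of_mul_eq_one hFG _ ▸ ha)
    (norm_ncEvalM_sub_ncEvalM_smul_le hFj hF hb hr0 hr1.le)).trans ?_
  push_cast
  nlinarith

theorem norm_ncEvalM_mul_pencil_mul_inv_le (hFG : F * G = 1) (hΛ : ‖∑ j, A j ⊗ₖ X j‖ ≤ 1)
    (hr0 : 0 ≤ r) (hr1 : r < 1) (ha : ‖ncEvalM G (fun i => (r : ℂ) • X i)‖ ≤ a)
    (hb : ‖ncEvalM F X‖ ≤ b) :
    ‖ncEvalM (F * pencil A) X * (ncEvalM (F * pencil A) (fun i => (r : ℂ) • X i))⁻¹‖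
      ≤ 2 * a * b := by
  rw [ncEvalM_mul, ncEvalM_mul, ncEvalM_pencil_smul, ncEvalM_pencil]
  exact Matrix.l2_opNorm_mul_mul_inv_le hΛ hr0 hr1 (inv_ncEvalM_of_mul_eq_one hFG _ ▸ ha) hb

end PointwiseEstimates

section NormOnBall

variable {d k l n : ℕ} {Q : Fin d → Matrix (Fin l) (Fin l) ℂ}

theorem memBallQ_smul {X : Fin d → Matrix (Fin n) (Fin n) ℂ} (hX : memBallQ Q X) {t : ℂ}
    (ht : ‖t‖ ≤ 1) : memBallQ Q (fun i => t • X i) := by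
  rw [memBallQ, opNorm_eq_norm] at hX ⊢
  simp only [Matrix.kronecker_smul, ← smul_sum, norm_smul]
  calc ‖t‖ * ‖∑ j, Q j ⊗ₖ X j‖ ≤ 1 * ‖∑ j, Q j ⊗ₖ X j‖ := by gcongr
    _ < 1 := by rwa [one_mul]

theorem memBallQ_zero : memBallQ Q (fun _ => (0 : Matrix (Fin n) (Fin n) ℂ)) := by
  simp [memBallQ, opNorm_eq_norm]

theorem ofReal_opNorm_le_normQ (G : Matrix (Fin k) (Fin k) (FreeAlgebra ℂ (Fin d)))
    {X : Fin d → Matrix (Fin (n + 1)) (Fin (n + 1)) ℂ} (hX : memBallQ Q X) :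
    ENNReal.ofReal (opNorm (ncEvalM G X)) ≤ normQ Q G :=
  le_iSup₂_of_le n X (le_iSup_of_le hX le_rfl)

theorem norm_ncEvalM_le_toReal_normQ {G : Matrix (Fin k) (Fin k) (FreeAlgebra ℂ (Fin d))}
    (hG : normQ Q G ≠ ⊤) {X : Fin d → Matrix (Fin (n + 1)) (Fin (n + 1)) ℂ}
    (hX : memBallQ Q X) : ‖ncEvalM G X‖ ≤ (normQ Q G).toReal :=
  (ENNReal.ofReal_le_iff_le_toReal hG).mp (ofReal_opNorm_le_normQ G hX)

theorem one_le_normQ_mul_normQ (hk : 0 < k)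
    {F G : Matrix (Fin k) (Fin k) (FreeAlgebra ℂ (Fin d))} (hFG : F * G = 1) :
    1 ≤ normQ Q G * normQ Q F := by
  have : NeZero k := ⟨hk.ne'⟩
  set X₀ : Fin d → Matrix (Fin (0 + 1)) (Fin (0 + 1)) ℂ := fun _ => 0
  have h₀ : (1 : ℝ) ≤ ‖ncEvalM G X₀‖ * ‖ncEvalM F X₀‖ :=
    calc (1 : ℝ) = ‖(1 : Matrix (Fin k × Fin (0 + 1)) (Fin k × Fin (0 + 1)) ℂ)‖ := norm_one.symm
      _ = ‖ncEvalM F X₀ * ncEvalM G X₀‖ := by rw [← ncEvalM_mul, hFG, ncEvalM_one]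
      _ ≤ ‖ncEvalM G X₀‖ * ‖ncEvalM F X₀‖ := (norm_mul_le _ _).trans_eq (mul_comm _ _)
  calc (1 : ℝ≥0∞) ≤ ENNReal.ofReal (‖ncEvalM G X₀‖ * ‖ncEvalM F X₀‖) := by
        rw [← ENNReal.ofReal_one]; exact ENNReal.ofReal_le_ofReal h₀
    _ = ENNReal.ofReal (opNorm (ncEvalM G X₀)) * ENNReal.ofReal (opNorm (ncEvalM F X₀)) :=
        ENNReal.ofReal_mul (norm_nonneg _)
    _ ≤ normQ Q G * normQ Q F := by
        gcongr <;> exact ofReal_opNorm_le_normQ _ memBallQ_zero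

end NormOnBall

theorem ngn_pencil_times_invertible_general {d k l : ℕ} (hk : 0 < k)
    (Q : Fin d → Matrix (Fin l) (Fin l) ℂ)
    (A : Fin d → Matrix (Fin k) (Fin k) ℂ)
    (hA : ∀ (n : ℕ) (X : Fin d → Matrix (Fin (n + 1)) (Fin (n + 1)) ℂ),
      memBallQ Q X → opNorm (∑ j, A j ⊗ₖ X j) ≤ 1)
    (F Finv : Matrix (Fin k) (Fin k) (FreeAlgebra ℂ (Fin d)))
    (hFinv : F * Finv = 1 ∧ Finv * F = 1)
    (N : ℕ) (Fj : ℕ → Matrix (Fin k) (Fin k) (FreeAlgebra ℂ (Fin d)))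
    (hFj : ∀ j, ∀ p q, HomogeneousDeg j (Fj j p q))
    (hF : F = ∑ j ∈ Finset.range (N + 1), Fj j)
    (LA P : Matrix (Fin k) (Fin k) (FreeAlgebra ℂ (Fin d)))
    (hLA : LA = 1 - ∑ j, Matrix.of fun p q => A j p q • FreeAlgebra.ι ℂ j)
    (hP : P = F * LA) :
    (∀ (r : ℝ), 0 ≤ r → r < 1 →
      ∀ (n : ℕ) (X : Fin d → Matrix (Fin (n + 1)) (Fin (n + 1)) ℂ), memBallQ Q X →
        IsUnit (ncEvalM P (fun i => (r : ℂ) • X i))) ∧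
    (⨆ (r : ℝ) (_ : r ∈ Set.Ico (0 : ℝ) 1) (n : ℕ)
        (X : Fin d → Matrix (Fin (n + 1)) (Fin (n + 1)) ℂ) (_ : memBallQ Q X),
        ENNReal.ofReal
          (opNorm ((ncEvalM P (fun i => (r : ℂ) • X i))⁻¹ * ncEvalM P X))) ≤
      1 + ((N ^ 2 + N + 1 : ℕ) : ℝ≥0∞) * normQ Q Finv * normQ Q F ∧
    (⨆ (r : ℝ) (_ : r ∈ Set.Ico (0 : ℝ) 1) (n : ℕ)
        (X : Fin d → Matrix (Fin (n + 1)) (Fin (n + 1)) ℂ) (_ : memBallQ Q X),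
        ENNReal.ofReal
          (opNorm (ncEvalM P X * (ncEvalM P (fun i => (r : ℂ) • X i))⁻¹))) ≤
      2 * normQ Q Finv * normQ Q F := by
  obtain rfl : P = F * pencil A := hP.trans (congrArg (F * ·) hLA)
  have hab : 1 ≤ normQ Q Finv * normQ Q F := one_le_normQ_mul_normQ hk hFinv.1
  have hr : ∀ {r : ℝ}, 0 ≤ r → r < 1 → ‖(r : ℂ)‖ ≤ 1 := fun hr0 hr1 => by
    rw [Complex.norm_of_nonneg hr0]; exact hr1.le
  refine ⟨fun r hr0 hr1 n X hX => isUnit_ncEvalM_mul_pencil_smul hFinv.1 (hA n X hX) hr0 hr1,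
    iSup₂_le fun r ⟨hr0, hr1⟩ => iSup₂_le fun n X => iSup_le fun hX => ?_,
    iSup₂_le fun r ⟨hr0, hr1⟩ => iSup₂_le fun n X => iSup_le fun hX => ?_⟩
  · refine ENNReal.ofReal_le_add_mul_mul ENNReal.one_ne_top (by simp) (by simp) hab
      fun ha hb => ?_
    have hab' := ENNReal.toReal_mono (ENNReal.mul_ne_top ha hb) hab
    rw [ENNReal.toReal_one, ENNReal.toReal_mul] at hab'
    rw [ENNReal.toReal_one, ENNReal.toReal_natCast]
    exact norm_inv_ncEvalM_mul_pencil_mul_le hFinv.1 hFj hF (hA n X hX) hr0 hr1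
      (norm_ncEvalM_le_toReal_normQ ha (memBallQ_smul hX (hr hr0 hr1)))
      (fun t ht => norm_ncEvalM_le_toReal_normQ hb (memBallQ_smul hX ht.le)) hab'
  · refine (ENNReal.ofReal_le_add_mul_mul ENNReal.zero_ne_top two_ne_zero ENNReal.ofNat_ne_top
      hab fun ha hb => ?_).trans_eq (zero_add _)
    rw [ENNReal.toReal_zero, zero_add, ENNReal.toReal_ofNat]
    exact norm_ncEvalM_mul_pencil_mul_inv_le hFinv.1 (hA n X hX) hr0 hr1
      (norm_ncEvalM_le_toReal_normQ ha (memBallQ_smul hX (hr hr0 hr1)))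
      (norm_ncEvalM_le_toReal_normQ hb hX)

/-- **NGN inequality for a pencil times an invertible matrix free polynomial.**
If `L_A = I − ∑_j A_j Z_j` with `‖∑_j A_j ⊗ X_j‖ ≤ 1` on `𝔻_Q`, `F` is invertible
in `M_k(ℂ⟨Z⟩)` with homogeneous expansion `F = ∑_{j=0}^N F_j`, and `P = F·L_A`,
then `P(rX)` is invertible for `r ∈ [0,1)`, `X ∈ 𝔻_Q`, and
`sup ‖P(rX)⁻¹P(X)‖ ≤ 1 + (N²+N+1)‖F⁻¹‖_Q‖F‖_Q` and
`sup ‖P(X)P(rX)⁻¹‖ ≤ 2‖F⁻¹‖_Q‖F‖_Q`, in `[0,∞]`. -/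
theorem ngn_pencil_times_invertible {d k l : ℕ} (hd : 0 < d) (hk : 0 < k) (hl : 0 < l)
    (Q : Fin d → Matrix (Fin l) (Fin l) ℂ) (hQ : LinearIndependent ℂ Q)
    (A : Fin d → Matrix (Fin k) (Fin k) ℂ)
    (hA : ∀ (n : ℕ) (X : Fin d → Matrix (Fin (n + 1)) (Fin (n + 1)) ℂ),
      memBallQ Q X → opNorm (∑ j, A j ⊗ₖ X j) ≤ 1)
    (F Finv : Matrix (Fin k) (Fin k) (FreeAlgebra ℂ (Fin d)))
    (hFinv : F * Finv = 1 ∧ Finv * F = 1)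
    (N : ℕ) (Fj : ℕ → Matrix (Fin k) (Fin k) (FreeAlgebra ℂ (Fin d)))
    (hFj : ∀ j, ∀ p q, HomogeneousDeg j (Fj j p q))
    (hF : F = ∑ j ∈ Finset.range (N + 1), Fj j)
    (LA P : Matrix (Fin k) (Fin k) (FreeAlgebra ℂ (Fin d)))
    (hLA : LA = 1 - ∑ j, Matrix.of fun p q => A j p q • FreeAlgebra.ι ℂ j)
    (hP : P = F * LA) :
    (∀ (r : ℝ), 0 ≤ r → r < 1 →
      ∀ (n : ℕ) (X : Fin d → Matrix (Fin (n + 1)) (Fin (n + 1)) ℂ), memBallQ Q X →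
        IsUnit (ncEvalM P (fun i => (r : ℂ) • X i))) ∧
    (⨆ (r : ℝ) (_ : r ∈ Set.Ico (0 : ℝ) 1) (n : ℕ)
        (X : Fin d → Matrix (Fin (n + 1)) (Fin (n + 1)) ℂ) (_ : memBallQ Q X),
        ENNReal.ofReal
          (opNorm ((ncEvalM P (fun i => (r : ℂ) • X i))⁻¹ * ncEvalM P X))) ≤
      1 + ((N ^ 2 + N + 1 : ℕ) : ℝ≥0∞) * normQ Q Finv * normQ Q F ∧
    (⨆ (r : ℝ) (_ : r ∈ Set.Ico (0 : ℝ) 1) (n : ℕ)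
        (X : Fin d → Matrix (Fin (n + 1)) (Fin (n + 1)) ℂ) (_ : memBallQ Q X),
        ENNReal.ofReal
          (opNorm (ncEvalM P X * (ncEvalM P (fun i => (r : ℂ) • X i))⁻¹))) ≤
      2 * normQ Q Finv * normQ Q F :=
  ngn_pencil_times_invertible_general hk Q A hA F Finv hFinv N Fj hFj hF LA P hLA hP
end
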